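/- arXiv:2509.19279 — 3 statements merged into one kernel-verified Lean document; each statement's English description precedes it below -/
import Mathlib

section
/- In the Minimum-k-Union-to-plurality-CCDC construction, if S' ⊆ S is any family of exactly k sets and D' = ⋃_{S ∈ S'} S, then p is the unique plurality winner of the election (C \ D', V): p's plurality score is at least k + N, b_1's score is k − 1 + N, each u ∈ U \ D' has score at most N, and each b_j with j ≥ 2 has score 0. -/
/-!
After deleting `D'`, every Type-2 vote goes to `b_1` and every Type-3 vote to `p`, while a
Type-1 vote goes to `p` if its set was deleted and to one of its own elements otherwise.
Hence `p` gets at least `k + N` votes, `b_1` exactly `k - 1 + N`, an element `u` at most the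
`N` votes of the sets containing it, and the other buffers none.
-/

/-- Candidates for the MkU construction: `U = Fin n`, buffers `B = Fin (n+1)`,
and the distinguished candidate `p`. -/
abbrev MCand (n : ℕ) := Fin n ⊕ (Fin (n + 1) ⊕ Unit)

/-- The distinguished candidate `p`. -/
def mp {n : ℕ} : MCand n := Sum.inr (Sum.inr ())

/-- Buffer candidate `b_j`. -/
def mb {n : ℕ} (j : Fin (n + 1)) : MCand n := Sum.inr (Sum.inl j)

/-- Element candidate `u`. -/
def mu {n : ℕ} (u : Fin n) : MCand n := Sum.inl u

/-- `N` = the maximum over `u ∈ U` of the number of sets containing `u`. -/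
def NVal {n m : ℕ} (S : Fin m → Finset (Fin n)) : ℕ :=
  Finset.univ.sup (fun u : Fin n => (Finset.univ.filter (fun i => u ∈ S i)).card)

/-- A vote is a preference list (most preferred first); its top choice after
deleting the candidates in `D` is the first surviving entry. -/
def topAfter {C : Type*} [DecidableEq C] (D : Finset C) (l : List C) : Option C :=
  (l.filter (fun c => decide (c ∉ D))).head?

/-- Plurality score of candidate `c` after deleting `D`: the number of votes
whose top surviving candidate is `c`. -/
def plScore {C : Type*} [DecidableEq C] (votes : List (List C)) (D : Finset C)
    (c : C) : ℕ :=
  votes.countP (fun l => decide (topAfter D l = some c))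

/-- Type-1 vote for set `S_i`: members of `S_i`, then `p`, then the rest. -/
noncomputable def type1 {n m : ℕ} (S : Fin m → Finset (Fin n)) (i : Fin m) : List (MCand n) :=
  ((S i).toList.map mu) ++ [mp] ++
    (Finset.univ.toList.filter
      (fun c : MCand n => decide (c ∉ ((S i).image mu ∪ {mp}))))

/-- Type-2 vote: `b_1 > ⋯ > b_{n+1} > (members of U) > p`. -/
def type2 (n : ℕ) : List (MCand n) :=
  ((List.finRange (n + 1)).map mb) ++ ((List.finRange n).map mu) ++ [mp]

/-- Type-3 vote: `p` first, then the rest. -/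
noncomputable def type3 (n : ℕ) : List (MCand n) :=
  mp :: (Finset.univ.toList.filter (fun c : MCand n => decide (c ≠ mp)))

/-- The election's votes: one Type-1 vote per set, `k - 1 + N` Type-2 votes and
`N` Type-3 votes. -/
noncomputable def mkuVotes {n m : ℕ} (S : Fin m → Finset (Fin n)) (k : ℕ) :
    List (List (MCand n)) :=
  ((List.finRange m).map (type1 S)) ++
    List.replicate (k - 1 + NVal S) (type2 n) ++
    List.replicate (NVal S) (type3 n)

open Finset

theorem countP_finRange_eq_card_filter {m : ℕ} (p : Fin m → Prop) [DecidablePred p] :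
    (List.finRange m).countP (fun i => decide (p i)) = #{i | p i} := by
  rw [List.countP_eq_length_filter, Finset.card_def, Finset.filter_val, Fin.univ_def]
  simp

section Plurality

variable {C : Type*} [DecidableEq C]

theorem topAfter_cons_of_not_mem (D : Finset C) {a : C} (l : List C) (ha : a ∉ D) :
    topAfter D (a :: l) = some a := by
  simp [topAfter, ha]

theorem topAfter_append (D : Finset C) (l₁ l₂ : List C) :
    topAfter D (l₁ ++ l₂) = (topAfter D l₁).or (topAfter D l₂) := by
  simp only [topAfter, List.filter_append, List.head?_append]

theorem mem_of_topAfter_eq_some {D : Finset C} {l : List C} {c : C}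
    (h : topAfter D l = some c) : c ∈ l :=
  List.mem_of_mem_filter (List.mem_of_mem_head? h)

theorem topAfter_eq_none_of_forall_mem {D : Finset C} {l : List C} (h : ∀ c ∈ l, c ∈ D) :
    topAfter D l = none := by
  simpa [topAfter, List.filter_eq_nil_iff] using h

theorem plScore_append (V₁ V₂ : List (List C)) (D : Finset C) (c : C) :
    plScore (V₁ ++ V₂) D c = plScore V₁ D c + plScore V₂ D c :=
  List.countP_append

theorem plScore_replicate (r : ℕ) (v : List C) (D : Finset C) (c : C) :
    plScore (List.replicate r v) D c = if topAfter D v = some c then r else 0 := by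
  simp [plScore, List.countP_replicate]

theorem plScore_map_finRange {m : ℕ} (v : Fin m → List C) (D : Finset C) (c : C) :
    plScore ((List.finRange m).map v) D c = #{i | topAfter D (v i) = some c} := by
  rw [plScore, List.countP_map]
  exact countP_finRange_eq_card_filter _

end Plurality

section MkU

variable {n m : ℕ} (S : Fin m → Finset (Fin n)) (k : ℕ) {D : Finset (MCand n)}

theorem card_filter_mem_le_NVal (u : Fin n) : #{i | u ∈ S i} ≤ NVal S :=
  Finset.le_sup (f := fun v => #{i | v ∈ S i}) (Finset.mem_univ u)

theorem topAfter_type1 (hp : mp ∉ D) (i : Fin m) :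
    topAfter D (type1 S i) = (topAfter D ((S i).toList.map mu)).or (some mp) := by
  rw [type1, List.append_assoc, topAfter_append, List.singleton_append,
    topAfter_cons_of_not_mem D _ hp]

theorem topAfter_type1_eq_some (hp : mp ∉ D) {i : Fin m} {c : MCand n}
    (h : topAfter D (type1 S i) = some c) : c = mp ∨ ∃ u ∈ S i, mu u = c := by
  rw [topAfter_type1 S hp] at h
  cases h' : topAfter D ((S i).toList.map mu) with
  | none => simp_all
  | some a =>
    right
    simp only [h', Option.some_or, Option.some.injEq] at h
    subst h
    simpa using mem_of_topAfter_eq_some h'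

theorem topAfter_type1_of_subset (hp : mp ∉ D) {i : Fin m} (hS : ∀ u ∈ S i, mu u ∈ D) :
    topAfter D (type1 S i) = some mp := by
  rw [topAfter_type1 S hp, topAfter_eq_none_of_forall_mem (by simpa using hS), Option.none_or]

theorem topAfter_type2 (hb : mb 0 ∉ D) : topAfter D (type2 n) = some (mb 0) := by
  rw [type2, List.finRange_succ, List.map_cons, List.cons_append, List.cons_append,
    topAfter_cons_of_not_mem D _ hb]

theorem topAfter_type3 (hp : mp ∉ D) : topAfter D (type3 n) = some mp :=
  topAfter_cons_of_not_mem D _ hp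

theorem plScore_mkuVotes (hp : mp ∉ D) (hb : mb 0 ∉ D) (c : MCand n) :
    plScore (mkuVotes S k) D c = #{i | topAfter D (type1 S i) = some c} +
      (if mb 0 = c then k - 1 + NVal S else 0) + (if mp = c then NVal S else 0) := by
  simp only [mkuVotes, plScore_append, plScore_map_finRange, plScore_replicate,
    topAfter_type2 hb, topAfter_type3 hp, Option.some.injEq]

theorem card_filter_topAfter_type1_eq_mb (hp : mp ∉ D) (j : Fin (n + 1)) :
    #{i | topAfter D (type1 S i) = some (mb j)} = 0 := by
  refine Finset.card_eq_zero.mpr (Finset.filter_eq_empty_iff.mpr fun i _ h => ?_)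
  rcases topAfter_type1_eq_some S hp h with h' | ⟨u, -, h'⟩ <;> simp [mb, mp, mu] at h'

theorem card_add_NVal_le_plScore_mp (hp : mp ∉ D) (hb : mb 0 ∉ D) {T : Finset (Fin m)}
    (hT : ∀ i ∈ T, ∀ u ∈ S i, mu u ∈ D) :
    #T + NVal S ≤ plScore (mkuVotes S k) D mp := by
  have hT_top : T ⊆ ({i | topAfter D (type1 S i) = some mp} : Finset _) := fun i hi =>
    Finset.mem_filter.mpr ⟨Finset.mem_univ i, topAfter_type1_of_subset S hp (hT i hi)⟩
  rw [plScore_mkuVotes S k hp hb, if_neg (by simp [mb, mp]), if_pos rfl]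
  have := Finset.card_le_card hT_top
  omega

theorem plScore_mb_zero (hp : mp ∉ D) (hb : mb 0 ∉ D) :
    plScore (mkuVotes S k) D (mb 0) = k - 1 + NVal S := by
  rw [plScore_mkuVotes S k hp hb, card_filter_topAfter_type1_eq_mb S hp]
  simp [mb, mp]

theorem plScore_mb_of_ne_zero (hp : mp ∉ D) (hb : mb 0 ∉ D) {j : Fin (n + 1)} (hj : j ≠ 0) :
    plScore (mkuVotes S k) D (mb j) = 0 := by
  rw [plScore_mkuVotes S k hp hb, card_filter_topAfter_type1_eq_mb S hp]
  simp [mb, mp, Ne.symm hj]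

theorem plScore_mu_le_NVal (hp : mp ∉ D) (hb : mb 0 ∉ D) (u : Fin n) :
    plScore (mkuVotes S k) D (mu u) ≤ NVal S := by
  have h_top :
      ({i | topAfter D (type1 S i) = some (mu u)} : Finset _) ⊆ ({i | u ∈ S i} : Finset _) := by
    intro i hi
    simp only [Finset.mem_filter, Finset.mem_univ, true_and] at hi ⊢
    rcases topAfter_type1_eq_some S hp hi with h | ⟨v, hv, h⟩
    · simp [mp, mu] at h
    · exact Sum.inl_injective h ▸ hv
  rw [plScore_mkuVotes S k hp hb, if_neg (by simp [mb, mu]), if_neg (by simp [mp, mu])]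
  simpa using (Finset.card_le_card h_top).trans (card_filter_mem_le_NVal S u)

end MkU

theorem stmt10_general {n m : ℕ}
    (S : Fin m → Finset (Fin n))
    (k : ℕ) (hk : 1 < k)
    (T : Finset (Fin m)) (hT : T.card = k)
    (D' : Finset (MCand n)) (hD' : D' = (T.biUnion S).image mu) :
    k + NVal S ≤ plScore (mkuVotes S k) D' mp ∧
    plScore (mkuVotes S k) D' (mb 0) = k - 1 + NVal S ∧
    (∀ u : Fin n, mu u ∉ D' → plScore (mkuVotes S k) D' (mu u) ≤ NVal S) ∧
    (∀ j : Fin (n + 1), j ≠ 0 → plScore (mkuVotes S k) D' (mb j) = 0) ∧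
    (∀ c : MCand n, c ∉ D' → c ≠ mp →
      plScore (mkuVotes S k) D' c < plScore (mkuVotes S k) D' mp) := by
  have hp : mp ∉ D' := by simp [hD', mp, mu]
  have hb : mb 0 ∉ D' := by simp [hD', mb, mu]
  have hT_deleted : ∀ i ∈ T, ∀ u ∈ S i, mu u ∈ D' := fun i hi u hu =>
    hD' ▸ Finset.mem_image_of_mem mu (Finset.mem_biUnion.mpr ⟨i, hi, hu⟩)
  have hp_score := hT ▸ card_add_NVal_le_plScore_mp S k hp hb hT_deleted
  refine ⟨hp_score, plScore_mb_zero S k hp hb, fun u _ => plScore_mu_le_NVal S k hp hb u,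
    fun j hj => plScore_mb_of_ne_zero S k hp hb hj, ?_⟩
  rintro (u | j | ⟨⟩) - hc
  · exact (plScore_mu_le_NVal S k hp hb u).trans_lt (by omega)
  · rcases eq_or_ne j 0 with rfl | hj
    · exact (plScore_mb_zero S k hp hb).trans_lt (by omega)
    · exact (plScore_mb_of_ne_zero S k hp hb hj).trans_lt (by omega)
  · exact absurd rfl hc

/-- In the MkU-to-plurality-CCDC construction, if `S'` is any family of exactly
`k` sets and `D' = ⋃_{S ∈ S'} S`, then: `p`'s plurality score is at least
`k + N`, `b_1`'s score is `k - 1 + N`, each surviving `u ∈ U` has score at most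
`N`, each buffer `b_j` with `j ≥ 2` has score `0`, and `p` is the unique
plurality winner of `(C \ D', V)`. -/
theorem stmt10 {n m : ℕ} (hn : 0 < n)
    (S : Fin m → Finset (Fin n)) (hSne : ∀ i, (S i).Nonempty)
    (k : ℕ) (hk : 1 < k) (hkm : k ≤ m)
    (T : Finset (Fin m)) (hT : T.card = k)
    (D' : Finset (MCand n)) (hD' : D' = (T.biUnion S).image mu) :
    k + NVal S ≤ plScore (mkuVotes S k) D' mp ∧
    plScore (mkuVotes S k) D' (mb 0) = k - 1 + NVal S ∧
    (∀ u : Fin n, mu u ∉ D' → plScore (mkuVotes S k) D' (mu u) ≤ NVal S) ∧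
    (∀ j : Fin (n + 1), j ≠ 0 → plScore (mkuVotes S k) D' (mb j) = 0) ∧
    (∀ c : MCand n, c ∉ D' → c ≠ mp →
      plScore (mkuVotes S k) D' c < plScore (mkuVotes S k) D' mp) :=
  stmt10_general S k hk T hT D' hD'
end

section
/- In the X3C-to-Condorcet-CCAV construction, if W' is a subset of the unregistered voters whose addition makes p the Condorcet winner, then |W'| ≤ k, each b ∈ B is ranked above p by exactly one voter of W', and consequently the family {S_i : the voter for S_i is in W'} is an exact cover of B by three-sets. -/
/-- Candidates for the X3C construction: `B = Fin (3k)` together with the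
special candidates `c` and `p`. -/
abbrev XCand (k : ℕ) := Fin (3 * k) ⊕ Bool

/-- The distinguished candidate `p`. -/
def xp {k : ℕ} : XCand k := Sum.inr true

/-- The candidate `c`. -/
def xc {k : ℕ} : XCand k := Sum.inr false

/-- The candidate `b`. -/
def xb {k : ℕ} (b : Fin (3 * k)) : XCand k := Sum.inl b

/-- A voter with preference list `l` (most preferred first) prefers `a` to `b`
when `a` occurs earlier in `l`.  The pairwise margin of `a` over `b` is the
number of voters preferring `a` to `b` minus the number preferring `b` to `a`. -/
def margin {C : Type*} [DecidableEq C] (votes : List (List C)) (a b : C) : ℤ :=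
  ((votes.countP (fun l => decide (l.idxOf a < l.idxOf b))) : ℤ) -
    ((votes.countP (fun l => decide (l.idxOf b < l.idxOf a))) : ℤ)

/-- Registered vote `B > p > c`. -/
def reg1 (k : ℕ) : List (XCand k) := ((List.finRange (3 * k)).map xb) ++ [xp, xc]

/-- Registered vote `p > c > B`. -/
def reg2 (k : ℕ) : List (XCand k) := [xp, xc] ++ ((List.finRange (3 * k)).map xb)

/-- Unregistered vote for `S_i`: `S_i > c > p > B \ S_i`. -/
noncomputable def unreg {k n : ℕ} (S : Fin n → Finset (Fin (3 * k))) (i : Fin n) :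
    List (XCand k) :=
  ((S i).toList.map xb) ++ [xc, xp] ++
    ((((Finset.univ : Finset (Fin (3 * k))) \ S i).toList).map xb)

/-- The election after adding the unregistered voters indexed by `T`:
`k - 1` votes `B > p > c`, two votes `p > c > B`, and for each `i ∈ T` the vote
`S_i > c > p > B \ S_i`. -/
noncomputable def xVotes {k n : ℕ} (S : Fin n → Finset (Fin (3 * k)))
    (T : Finset (Fin n)) : List (List (XCand k)) :=
  List.replicate (k - 1) (reg1 k) ++ List.replicate 2 (reg2 k) ++
    (T.toList.map (unreg S))

/-!
Every ballot contributes `±1` to a pairwise margin. Writing `m_b` for the number of chosen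
sets containing `b`, the margin of `p` over `c` is `k + 1 - |T|` and the margin of `p` over
`b ∈ B` is `3 - k + |T| - 2 m_b`. Positivity of the first gives `|T| ≤ k`, and then positivity
of the second forces `m_b ≤ 1`. For `T = ∅` the margin over `b` would be `3 - k ≤ 0`, so some
`m_b = 1`, which forces `|T| ≥ k`. Thus `k` three-sets cover each of the `3k` elements at most
once, and the double count `∑_b m_b = 3|T| = |B|` shows that they cover each exactly once.
-/

open Finset

section Ballot
variable {C : Type*} [DecidableEq C]

def ballotMargin (l : List C) (a b : C) : ℤ :=
  (if l.idxOf a < l.idxOf b then 1 else 0) - (if l.idxOf b < l.idxOf a then 1 else 0)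

theorem margin_eq_sum_ballotMargin (votes : List (List C)) (a b : C) :
    margin votes a b = (votes.map fun l => ballotMargin l a b).sum := by
  induction votes with
  | nil => simp [margin]
  | cons l votes ih =>
    rw [List.map_cons, List.sum_cons, ← ih]
    simp only [margin, ballotMargin, List.countP_cons, decide_eq_true_eq]
    split_ifs <;> push_cast <;> ring

theorem ballotMargin_of_lt {l : List C} {a b : C} (h : l.idxOf a < l.idxOf b) :
    ballotMargin l a b = 1 := by
  simp [ballotMargin, h, h.not_gt]

theorem ballotMargin_of_gt {l : List C} {a b : C} (h : l.idxOf b < l.idxOf a) :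
    ballotMargin l a b = -1 := by
  simp [ballotMargin, h, h.not_gt]

theorem idxOf_append_lt_idxOf_append {l₁ l₂ : List C} {a b : C} (ha : a ∈ l₁)
    (hb : b ∉ l₁) :
    (l₁ ++ l₂).idxOf a < (l₁ ++ l₂).idxOf b := by
  rw [List.idxOf_append_of_mem ha, List.idxOf_append_of_notMem hb]
  exact (List.idxOf_lt_length_of_mem ha).trans_le (Nat.le_add_right _ _)

end Ballot

section Construction
variable {k n : ℕ}

theorem xp_notMem_map_xb (l : List (Fin (3 * k))) : xp ∉ l.map xb := by simp [xp, xb]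

theorem ballotMargin_reg1_xp_xc : ballotMargin (reg1 k) xp xc = 1 := by
  apply ballotMargin_of_lt
  rw [reg1, show ∀ l : List (XCand k), l ++ [xp, xc] = (l ++ [xp]) ++ [xc] by simp]
  exact idxOf_append_lt_idxOf_append (by simp) (by simp [xb, xc, xp])

theorem ballotMargin_reg1_xp_xb (b : Fin (3 * k)) : ballotMargin (reg1 k) xp (xb b) = -1 :=
  ballotMargin_of_gt (idxOf_append_lt_idxOf_append (by simp) (xp_notMem_map_xb _))

theorem ballotMargin_reg2_xp {d : XCand k} (hd : d ≠ xp) : ballotMargin (reg2 k) xp d = 1 :=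
  ballotMargin_of_lt (l := [xp] ++ xc :: (List.finRange (3 * k)).map xb)
    (idxOf_append_lt_idxOf_append (List.mem_singleton_self _) (by simpa using hd))

variable (S : Fin n → Finset (Fin (3 * k))) (i : Fin n)

theorem ballotMargin_unreg_xp_xc : ballotMargin (unreg S i) xp xc = -1 := by
  apply ballotMargin_of_gt
  rw [unreg, show ∀ l r : List (XCand k), l ++ [xc, xp] ++ r = (l ++ [xc]) ++ (xp :: r) by simp]
  exact idxOf_append_lt_idxOf_append (by simp) (by simp [xb, xc, xp])

theorem ballotMargin_unreg_xp_xb (b : Fin (3 * k)) :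
    ballotMargin (unreg S i) xp (xb b) = if b ∈ S i then -1 else 1 := by
  split_ifs with hb
  · apply ballotMargin_of_gt
    rw [unreg, List.append_assoc]
    exact idxOf_append_lt_idxOf_append (by simpa [xb] using hb) (xp_notMem_map_xb _)
  · exact ballotMargin_of_lt
      (idxOf_append_lt_idxOf_append (by simp) (by simpa [xb, xc, xp] using hb))

variable (T : Finset (Fin n))

theorem margin_xVotes (a d : XCand k) :
    margin (xVotes S T) a d = ((k - 1 : ℕ) : ℤ) * ballotMargin (reg1 k) a d +
      2 * ballotMargin (reg2 k) a d + ∑ i ∈ T, ballotMargin (unreg S i) a d := by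
  rw [margin_eq_sum_ballotMargin, xVotes]
  simp only [List.map_append, List.map_replicate, List.map_map, Function.comp_def,
    List.sum_append, List.sum_replicate, sum_map_toList, nsmul_eq_mul, Nat.cast_ofNat]

theorem margin_xVotes_xp_xc (hk : 1 ≤ k) : margin (xVotes S T) xp xc = k + 1 - #T := by
  rw [margin_xVotes, ballotMargin_reg1_xp_xc, ballotMargin_reg2_xp (by simp [xc, xp])]
  simp only [ballotMargin_unreg_xp_xc, sum_const, smul_neg, nsmul_eq_mul, mul_one]
  push_cast [hk]
  ring

theorem margin_xVotes_xp_xb (hk : 1 ≤ k) (b : Fin (3 * k)) :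
    margin (xVotes S T) xp (xb b) = 3 - k + #T - 2 * #{i ∈ T | b ∈ S i} := by
  rw [margin_xVotes, ballotMargin_reg1_xp_xb, ballotMargin_reg2_xp (by simp [xb, xp])]
  have hsign (i : Fin n) :
      (if b ∈ S i then (-1 : ℤ) else 1) = 1 - 2 * if b ∈ S i then 1 else 0 := by
    split_ifs <;> norm_num
  simp only [ballotMargin_unreg_xp_xb, hsign, sum_sub_distrib, ← mul_sum, sum_boole, sum_const,
    nsmul_eq_mul, mul_one]
  push_cast [hk]
  ring

end Construction

section ExactCover
variable {ι β : Type*} {T : Finset ι} {S : ι → Finset β}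

theorem disjoint_of_existsUnique (h : ∀ b, ∃! i, i ∈ T ∧ b ∈ S i) {i j : ι}
    (hi : i ∈ T) (hj : j ∈ T) (hij : i ≠ j) : Disjoint (S i) (S j) :=
  disjoint_left.2 fun b hbi hbj => hij ((h b).unique ⟨hi, hbi⟩ ⟨hj, hbj⟩)

variable [Fintype β] [DecidableEq β]

theorem biUnion_eq_univ_of_existsUnique (h : ∀ b, ∃! i, i ∈ T ∧ b ∈ S i) :
    T.biUnion S = univ :=
  eq_univ_of_forall fun b =>
    let ⟨i, ⟨hi, hb⟩, _⟩ := h b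
    mem_biUnion.2 ⟨i, hi, hb⟩

theorem sum_card_filter_mem_eq_sum_card : ∑ b, #{i ∈ T | b ∈ S i} = ∑ i ∈ T, #(S i) := by
  have := sum_card_bipartiteAbove_eq_sum_card_bipartiteBelow (s := T) (t := univ)
    (fun i b => b ∈ S i)
  simpa [bipartiteAbove, bipartiteBelow] using this.symm

theorem card_filter_mem_eq_one (hle : ∀ b, #{i ∈ T | b ∈ S i} ≤ 1)
    (hsum : ∑ i ∈ T, #(S i) = Fintype.card β) (b : β) : #{i ∈ T | b ∈ S i} = 1 := by
  have : ∑ b, #{i ∈ T | b ∈ S i} = ∑ _b : β, 1 := by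
    rw [sum_card_filter_mem_eq_sum_card, hsum, sum_const, card_univ, smul_eq_mul, mul_one]
  exact (sum_eq_sum_iff_of_le fun b _ => hle b).1 this b (mem_univ b)

end ExactCover

/-- In the X3C-to-Condorcet-CCAV construction, if adding the unregistered voters
indexed by `T` makes `p` the Condorcet winner, then `|T| ≤ k`, each `b ∈ B` is
ranked above `p` by exactly one added voter (i.e. lies in `S_i` for exactly one
`i ∈ T`), and consequently `{S_i : i ∈ T}` is an exact cover of `B` by
three-sets: `|T| = k`, the union is `B`, and the sets are pairwise disjoint. -/
theorem stmt15 {k n : ℕ} (hk : 3 ≤ k)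
    (S : Fin n → Finset (Fin (3 * k))) (hS3 : ∀ i, (S i).card = 3)
    (T : Finset (Fin n))
    (hwin : ∀ d : XCand k, d ≠ xp → 0 < margin (xVotes S T) xp d) :
    T.card ≤ k ∧
    (∀ b : Fin (3 * k), ∃! i : Fin n, i ∈ T ∧ b ∈ S i) ∧
    T.card = k ∧
    T.biUnion S = Finset.univ ∧
    (∀ i ∈ T, ∀ j ∈ T, i ≠ j → Disjoint (S i) (S j)) := by
  have hTk : #T ≤ k := by
    have := hwin xc (by simp [xc, xp])
    rw [margin_xVotes_xp_xc S T (by omega)] at this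
    omega
  have hb (b : Fin (3 * k)) : k + 2 * #{i ∈ T | b ∈ S i} ≤ #T + 2 := by
    have := hwin (xb b) (by simp [xb, xp])
    rw [margin_xVotes_xp_xb S T (by omega)] at this
    omega
  have hkT : k ≤ #T := by
    obtain ⟨i, hi⟩ : T.Nonempty := by
      rw [nonempty_iff_ne_empty]
      rintro rfl
      have := hb ⟨0, by omega⟩
      rw [filter_empty, card_empty] at this
      omega
    obtain ⟨b, hbi⟩ : (S i).Nonempty := by rw [← card_pos, hS3]; norm_num
    have : 0 < #{j ∈ T | b ∈ S j} := card_pos.2 ⟨i, mem_filter.2 ⟨hi, hbi⟩⟩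
    have := hb b
    omega
  have hcard : #T = k := le_antisymm hTk hkT
  have hcount : ∀ b, #{i ∈ T | b ∈ S i} = 1 :=
    card_filter_mem_eq_one (fun b => by have := hb b; omega) (by simp [hS3, hcard, mul_comm])
  have huniq (b : Fin (3 * k)) : ∃! i, i ∈ T ∧ b ∈ S i := by
    simpa using card_eq_one_iff_existsUnique.1 (hcount b)
  exact ⟨hTk, huniq, hcard, biUnion_eq_univ_of_existsUnique huniq,
    fun i hi j hj => disjoint_of_existsUnique huniq hi hj⟩
end

section
/- In the Hitting-Set-to-Condorcet-CCUDV construction, if V' is any set of voters whose deletion makes p the Condorcet winner, then V' contains no voter x_i, exactly k of the voters y_j are retained, and the retained indices {b_j : y_j ∉ V'} form a hitting set of S of size k. -/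
/-! Let `X` and `Y` be the sets of retained voters `x_i` and `y_j`. Every ballot contains `p`, so
the margin of `p` over any other candidate `c` is `|X| + |Y| - 2·#{ballots ranking c above p}`.
Against `e` this gives `|X| > |Y|`. Against `d_t` it gives `|X| + |Y| > 2|X \ {t}|`, which for
`t ∉ X` contradicts `|X| > |Y|`; hence `X` is everything, and then `|Y| = k`. Finally, if no
retained `y_j` has `b_j ∈ S_s`, then `x_1` and all of `Y` rank `S_s` above `p`, and the margin is
`(k + 1) + k - 2(k + 1) < 0`. -/

/-- Candidates for the Hitting-Set-to-Condorcet-CCUDV construction: `p` (coded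
as `none`), the `n` set-candidates `S_1,…,S_n`, the `k+1` candidates
`d_1,…,d_{k+1}`, and `e`. -/
abbrev KCand (n k : ℕ) := Option (Fin n ⊕ (Fin (k + 1) ⊕ Unit))

/-- The distinguished candidate `p`. -/
def kp {n k : ℕ} : KCand n k := none

/-- The set-candidate `S_i`. -/
def ks {n k : ℕ} (i : Fin n) : KCand n k := some (Sum.inl i)

/-- The candidate `d_i`. -/
def kd {n k : ℕ} (i : Fin (k + 1)) : KCand n k := some (Sum.inr (Sum.inl i))

/-- The candidate `e`. -/
def ke {n k : ℕ} : KCand n k := some (Sum.inr (Sum.inr ()))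

/-- The voter `x_i` (with `x_1` corresponding to `i = 0`):
`x_1` has order `S_1,…,S_n > d_2,…,d_{k+1} > p > d_1 > e`; for `i ≠ 0`, `x_i`
has order `D \ {d_i} > p > d_i > e > S_1,…,S_n`. -/
def xvote (n k : ℕ) (i : Fin (k + 1)) : List (KCand n k) :=
  if i = 0 then
    ((List.finRange n).map ks) ++
      (((List.finRange (k + 1)).filter (fun t => decide (t ≠ 0))).map kd) ++
      [kp, kd 0, ke]
  else
    (((List.finRange (k + 1)).filter (fun t => decide (t ≠ i))).map kd) ++
      [kp, kd i, ke] ++ ((List.finRange n).map ks)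

/-- The voter `y_j`: order
`(S-candidates not containing b_j) > e > p > d_1,…,d_{k+1} >
(S-candidates containing b_j)`. -/
def yvote (n k : ℕ) {m : ℕ} (S : Fin n → Finset (Fin m)) (j : Fin m) :
    List (KCand n k) :=
  (((List.finRange n).filter (fun i => decide (j ∉ S i))).map ks) ++
    [ke, kp] ++ ((List.finRange (k + 1)).map kd) ++
    (((List.finRange n).filter (fun i => decide (j ∈ S i))).map ks)

open Finset

namespace List

variable {α : Type*} [BEq α] [LawfulBEq α]

theorem idxOf_ne_idxOf {l : List α} {a b : α} (ha : a ∈ l) (hab : a ≠ b) :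
    l.idxOf a ≠ l.idxOf b := by
  by_cases hb : b ∈ l
  · exact fun h => hab ((idxOf_inj ha).1 h)
  · rw [idxOf_of_notMem hb]
    exact (idxOf_lt_length_of_mem ha).ne

end List

theorem Finset.countP_toList {α : Type*} (s : Finset α) (p : α → Prop) [DecidablePred p] :
    s.toList.countP (fun x => decide (p x)) = #{x ∈ s | p x} := by
  rw [← Multiset.coe_countP, coe_toList, Multiset.countP_eq_card_filter]
  rfl

theorem Finset.card_filter_eq_card_filter_toLeft_add_card_filter_toRight {α β : Type*}
    [DecidableEq α] [DecidableEq β] (u : Finset (α ⊕ β)) (P : α ⊕ β → Prop) [DecidablePred P] :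
    #{x ∈ u | P x} = #{a ∈ u.toLeft | P (.inl a)} + #{b ∈ u.toRight | P (.inr b)} := by
  rw [← card_toLeft_add_card_toRight]
  congr 2 <;> ext <;> simp

section Margin

variable {ι C : Type*} [DecidableEq C]

abbrev Prefers (l : List C) (a b : C) : Prop := l.idxOf a < l.idxOf b

theorem prefers_append_cons_iff {l₁ l₂ : List C} {a b : C} (ha : a ∉ l₁) :
    Prefers (l₁ ++ a :: l₂) b a ↔ b ∈ l₁ := by
  rw [Prefers, List.idxOf_append_of_notMem ha, List.idxOf_cons_self]
  by_cases hb : b ∈ l₁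
  · simpa [List.idxOf_append_of_mem hb, hb] using List.idxOf_lt_length_of_mem hb
  · simp [List.idxOf_append_of_notMem hb, hb]

theorem margin_map_toList (s : Finset ι) (f : ι → List C) (a b : C) :
    margin (s.toList.map f) a b = #{i ∈ s | Prefers (f i) a b} - #{i ∈ s | Prefers (f i) b a} := by
  simp only [margin, List.countP_map]
  exact congr_arg₂ _ (congrArg _ (s.countP_toList _)) (congrArg _ (s.countP_toList _))

theorem margin_map_toList_eq_card_sub {s : Finset ι} {f : ι → List C} {a b : C} (hab : a ≠ b)
    (ha : ∀ i ∈ s, a ∈ f i) :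
    margin (s.toList.map f) a b = #s - 2 * #{i ∈ s | Prefers (f i) b a} := by
  have hfilter : {i ∈ s | Prefers (f i) a b} = {i ∈ s | ¬ Prefers (f i) b a} := by
    refine Finset.filter_congr fun i hi => ?_
    have := List.idxOf_ne_idxOf (ha i hi) hab
    omega
  have hsplit := card_filter_add_card_filter_not (s := s) (fun i => Prefers (f i) b a)
  rw [margin_map_toList, hfilter]
  omega

end Margin

section Construction

variable {n m k : ℕ}

theorem kp_mem_xvote (i : Fin (k + 1)) : kp ∈ xvote n k i := by
  unfold xvote
  split_ifs <;> simp

theorem kp_mem_yvote (S : Fin n → Finset (Fin m)) (j : Fin m) : kp ∈ yvote n k S j := by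
  simp [yvote]

theorem xvote_prefers_kp_iff (i : Fin (k + 1)) (c : KCand n k) :
    Prefers (xvote n k i) c kp ↔ (∃ t ≠ i, kd t = c) ∨ (i = 0 ∧ ∃ s, ks s = c) := by
  unfold xvote
  split_ifs with hi
  · subst hi
    rw [prefers_append_cons_iff (by simp [kp, ks, kd])]
    simp [or_comm]
  · rw [List.append_assoc, List.cons_append, prefers_append_cons_iff (by simp [kp, kd])]
    simp [hi]

theorem yvote_prefers_kp_iff (S : Fin n → Finset (Fin m)) (j : Fin m) (c : KCand n k) :
    Prefers (yvote n k S j) c kp ↔ c = ke ∨ ∃ s, j ∉ S s ∧ ks s = c := by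
  unfold yvote
  simp only [List.append_assoc, List.cons_append, List.nil_append]
  rw [List.append_cons _ ke, prefers_append_cons_iff (by simp [kp, ks, ke])]
  simp [or_comm]

variable (S : Fin n → Finset (Fin m)) (R : Finset (Fin (k + 1) ⊕ Fin m))

theorem margin_kp_eq {c : KCand n k} (hc : c ≠ kp) :
    margin (R.toList.map (Sum.elim (xvote n k) (yvote n k S))) kp c =
      #R.toLeft + #R.toRight - 2 * (#{i ∈ R.toLeft | Prefers (xvote n k i) c kp} +
        #{j ∈ R.toRight | Prefers (yvote n k S j) c kp}) := by
  have hkp : ∀ v ∈ R, kp ∈ Sum.elim (xvote n k) (yvote n k S) v := by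
    rintro (i | j) -
    exacts [kp_mem_xvote i, kp_mem_yvote S j]
  rw [margin_map_toList_eq_card_sub hc.symm hkp,
    card_filter_eq_card_filter_toLeft_add_card_filter_toRight, ← card_toLeft_add_card_toRight]
  push_cast
  rfl

theorem margin_kp_ke :
    margin (R.toList.map (Sum.elim (xvote n k) (yvote n k S))) kp ke =
      #R.toLeft - #R.toRight := by
  rw [margin_kp_eq S R (by simp [ke, kp])]
  simp only [xvote_prefers_kp_iff, yvote_prefers_kp_iff, ke, kd, ks, ne_eq, Option.some.injEq,
    Sum.inr.injEq, reduceCtorEq, and_false, exists_const, exists_false, or_self, or_false,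
    filter_false, filter_true, card_empty, CharP.cast_eq_zero, zero_add]
  ring

theorem margin_kp_kd (t : Fin (k + 1)) :
    margin (R.toList.map (Sum.elim (xvote n k) (yvote n k S))) kp (kd t) =
      #R.toLeft + #R.toRight - 2 * #(R.toLeft.erase t) := by
  rw [margin_kp_eq S R (by simp [kd, kp])]
  simp [xvote_prefers_kp_iff, yvote_prefers_kp_iff, kd, ks, ke, filter_ne, eq_comm]

theorem margin_kp_ks (s : Fin n) :
    margin (R.toList.map (Sum.elim (xvote n k) (yvote n k S))) kp (ks s) =
      #R.toLeft + #R.toRight - 2 * (#{i ∈ R.toLeft | i = 0} + #{j ∈ R.toRight | j ∉ S s}) := by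
  rw [margin_kp_eq S R (by simp [ks, kp])]
  simp [xvote_prefers_kp_iff, yvote_prefers_kp_iff, kd, ks, ke]

end Construction

theorem stmt17_general {n m : ℕ} (k : ℕ)
    (S : Fin n → Finset (Fin m))
    (V' : Finset (Fin (k + 1) ⊕ Fin m))
    (votes : List (List (KCand n k)))
    (hv : votes = ((Finset.univ \ V').toList.map
      (Sum.elim (xvote n k) (yvote n k S))))
    (hwin : ∀ d : KCand n k, d ≠ kp → 0 < margin votes kp d) :
    (∀ i : Fin (k + 1), Sum.inl i ∉ V') ∧
    (Finset.univ.filter (fun j : Fin m => Sum.inr j ∉ V')).card = k ∧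
    (∀ i : Fin n, ∃ j : Fin m, Sum.inr j ∉ V' ∧ j ∈ S i) := by
  subst hv
  set R := univ \ V'
  have hmargin_e := margin_kp_ke S R ▸ hwin ke (by simp [ke, kp])
  have hmargin_d t := margin_kp_kd S R t ▸ hwin (kd t) (by simp [kd, kp])
  have hX : R.toLeft = univ := by
    refine eq_univ_of_forall fun t => by_contra fun ht => ?_
    have := erase_eq_of_notMem ht ▸ hmargin_d t
    omega
  have hY : #R.toRight = k := by
    have := hmargin_d 0
    rw [hX, card_erase_of_mem (mem_univ 0), card_univ, Fintype.card_fin] at this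
    rw [hX, card_univ, Fintype.card_fin] at hmargin_e
    omega
  refine ⟨fun i => by simpa [R] using hX.ge (mem_univ i), ?_, fun s => ?_⟩
  · convert hY using 2
    ext j
    simp [R]
  · by_contra! hmiss
    have hmargin_s := margin_kp_ks S R s ▸ hwin (ks s) (by simp [ks, kp])
    rw [filter_true_of_mem fun j hj => hmiss j (by simpa [R] using hj), hX, filter_eq' univ 0,
      if_pos (mem_univ 0), card_singleton, card_univ, Fintype.card_fin] at hmargin_s
    omega

/-- In the Hitting-Set-to-Condorcet-CCUDV construction, if deleting a set `V'`
of voters makes `p` the Condorcet winner, then `V'` contains no voter `x_i`,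
exactly `k` of the voters `y_j` are retained, and the retained indices
`{b_j : y_j ∉ V'}` form a hitting set of `S` of size `k`. -/
theorem stmt17 {n m : ℕ} (k : ℕ) (hk : 0 < k) (hkm : k ≤ m)
    (S : Fin n → Finset (Fin m))
    (V' : Finset (Fin (k + 1) ⊕ Fin m))
    (votes : List (List (KCand n k)))
    (hv : votes = ((Finset.univ \ V').toList.map
      (Sum.elim (xvote n k) (yvote n k S))))
    (hwin : ∀ d : KCand n k, d ≠ kp → 0 < margin votes kp d) :
    (∀ i : Fin (k + 1), Sum.inl i ∉ V') ∧
    (Finset.univ.filter (fun j : Fin m => Sum.inr j ∉ V')).card = k ∧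
    (∀ i : Fin n, ∃ j : Fin m, Sum.inr j ∉ V' ∧ j ∈ S i) :=
  stmt17_general k S V' votes hv hwin
end
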